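/- In the common-panel factor-model setup, suppose α₁ = α₂ = α. Then a_{1,p} = a_{2,p} for every p and, for every x > 0, P(Q_p ≤ a_{1,p} x) → Ψ_α(x) · Ψ_α(x) = exp(−2x^{−α}) as p → ∞. (Corollary 1, second case.) -/

import Mathlib

open MeasureTheory ProbabilityTheory Filter

noncomputable section

/-- The Fréchet distribution function with tail index `α`. -/
def frechetCDF (α x : ℝ) : ℝ := if 0 < x then Real.exp (-x ^ (-α)) else 0

/-- The norming constant `a_p = (Σ_{i<p} σ_i^α)^{1/α}`. -/
def normConst (σ : ℕ → ℝ) (α : ℝ) (p : ℕ) : ℝ :=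
  (∑ i ∈ Finset.range p, σ i ^ α) ^ (1 / α)

/-- Maximum of the first `p₁` variables of the first group and the first `p₂`
variables of the second group. -/
def Qmax {Ω : Type*} (X₁ X₂ : ℕ → Ω → ℝ) (p₁ p₂ : ℕ) (ω : Ω) : ℝ :=
  max (⨆ i : Fin p₁, X₁ i ω) (⨆ j : Fin p₂, X₂ j ω)

/-- Codomains of the family consisting of the factor `Z` and the two noise arrays. -/
def mixCodom (d : ℕ) : Unit ⊕ ℕ ⊕ ℕ → Type
  | Sum.inl _ => Fin d → ℝ
  | Sum.inr _ => ℝ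

instance mixCodomMeasurableSpace (d : ℕ) : ∀ i, MeasurableSpace (mixCodom d i)
  | Sum.inl _ => inferInstanceAs (MeasurableSpace (Fin d → ℝ))
  | Sum.inr (Sum.inl _) => inferInstanceAs (MeasurableSpace ℝ)
  | Sum.inr (Sum.inr _) => inferInstanceAs (MeasurableSpace ℝ)

/-- The family consisting of the factor `Z` and the two noise arrays. -/
def mixFun {Ω : Type*} {d : ℕ} (Z : Ω → Fin d → ℝ) (ε₁ ε₂ : ℕ → Ω → ℝ) :
    ∀ i : Unit ⊕ ℕ ⊕ ℕ, Ω → mixCodom d i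
  | Sum.inl _ => Z
  | Sum.inr (Sum.inl i) => ε₁ i
  | Sum.inr (Sum.inr j) => ε₂ j

/-! Conditionally on `Z`, the `2p` noise variables are independent, so `P(Q_p ≤ a_p x | Z)` is a
product of the factors `1 - G_k(t_{p,i})` with `t_{p,i} = (a_p x - f_i(Z)) / σ_i` and `G_k` the
tail of `ε_{k,1}`. Since `f_i(Z)` is bounded and `σ_i ∈ [C₁, C₂]`, `t_{p,i} → ∞` uniformly in `i`,
so `G_k(t_{p,i}) ≈ t_{p,i}^{-α} ≈ σ_i^α / (a_p x)^α`, and `Σ_i σ_i^α = a_p^α` gives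
`Σ_i G_k(t_{p,i}) → x^{-α}`. As the factors are uniformly close to `1`, `log (1 - u) ~ -u` turns the
product into `exp (-x^{-α})` for each group, and dominated convergence removes the conditioning. -/

open Finset Real Topology

theorem Filter.eventually_prod_top_iff {α β : Type*} {f : Filter α} {p : α × β → Prop} :
    (∀ᶠ q in f ×ˢ ⊤, p q) ↔ ∀ᶠ a in f, ∀ b, p (a, b) := by
  simp only [prod_top, eventually_comap, Prod.forall]
  refine eventually_congr (Eventually.of_forall fun a => ⟨fun h b => h a b rfl, ?_⟩)
  rintro h a' b rfl
  exact h b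

-- A limit along `atTop ×ˢ ⊤` on `ℕ × ℕ` is a limit as `p → ∞` uniformly in the index `i`.
theorem tendsto_sum_mul_of_tendsto_prod_top {w r : ℕ → ℕ → ℝ} {L : ℝ}
    (hw : ∀ᶠ q in atTop ×ˢ ⊤, 0 ≤ w q.1 q.2)
    (hsum : Tendsto (fun p => ∑ i ∈ range p, w p i) atTop (𝓝 L))
    (hr : Tendsto (fun q : ℕ × ℕ => r q.1 q.2) (atTop ×ˢ ⊤) (𝓝 1)) :
    Tendsto (fun p => ∑ i ∈ range p, w p i * r p i) atTop (𝓝 L) := by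
  suffices h : Tendsto (fun p => ∑ i ∈ range p, w p i * (r p i - 1)) atTop (𝓝 0) by
    simpa [mul_sub, sum_sub_distrib] using hsum.add h
  rw [Metric.tendsto_nhds]
  intro ε hε
  have hB : 0 < |L| + 1 := by positivity
  have hr' := Filter.eventually_prod_top_iff.1
    ((Metric.tendsto_nhds.1 hr) (ε / (|L| + 1)) (div_pos hε hB))
  filter_upwards [Filter.eventually_prod_top_iff.1 hw, hr',
    hsum.eventually (eventually_lt_nhds (lt_of_le_of_lt (le_abs_self L) (lt_add_one _)))]
    with p hwp hrp hsp
  rw [dist_zero_right, Real.norm_eq_abs]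
  calc |∑ i ∈ range p, w p i * (r p i - 1)|
      ≤ ∑ i ∈ range p, w p i * (ε / (|L| + 1)) := by
        refine (abs_sum_le_sum_abs _ _).trans (sum_le_sum fun i _ => ?_)
        rw [abs_mul, abs_of_nonneg (hwp i)]
        exact mul_le_mul_of_nonneg_left (le_of_lt (hrp i)) (hwp i)
    _ = (∑ i ∈ range p, w p i) * (ε / (|L| + 1)) := by rw [sum_mul]
    _ < (|L| + 1) * (ε / (|L| + 1)) := by
        exact mul_lt_mul_of_pos_right hsp (div_pos hε hB)
    _ = ε := by field_simp

theorem hasDerivAt_neg_log_one_sub_zero : HasDerivAt (fun u : ℝ => -log (1 - u)) 1 0 := by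
  have h := (((hasDerivAt_id (0 : ℝ)).const_sub 1).log (by norm_num)).neg
  simpa [Pi.neg_def] using h

theorem tendsto_prod_one_sub_of_tendsto_prod_top {g : ℕ → ℕ → ℝ} {s : ℝ}
    (hg : ∀ p i, 0 ≤ g p i) (hsum : Tendsto (fun p => ∑ i ∈ range p, g p i) atTop (𝓝 s))
    (hg0 : Tendsto (fun q : ℕ × ℕ => g q.1 q.2) (atTop ×ˢ ⊤) (𝓝 0)) :
    Tendsto (fun p => ∏ i ∈ range p, (1 - g p i)) atTop (𝓝 (exp (-s))) := by
  set ℓ : ℝ → ℝ := fun u => -log (1 - u)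
  -- `ℓ u = u * ρ u` with `ρ → ℓ' 0 = 1`, so the sums of `ℓ (g p i)` are weighted sums of `g p i`.
  have hℓ : ∀ u, ℓ u = u * dslope ℓ 0 u := fun u => by
    simpa [ℓ] using (sub_smul_dslope ℓ 0 u).symm
  have hρ : Tendsto (dslope ℓ 0) (𝓝 0) (𝓝 1) := by
    have h := continuousAt_dslope_same.2 hasDerivAt_neg_log_one_sub_zero.differentiableAt
    rwa [ContinuousAt, dslope_same, hasDerivAt_neg_log_one_sub_zero.deriv] at h
  have hlog : Tendsto (fun p => ∑ i ∈ range p, ℓ (g p i)) atTop (𝓝 s) := by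
    simp_rw [hℓ]
    exact tendsto_sum_mul_of_tendsto_prod_top (Eventually.of_forall fun q => hg q.1 q.2) hsum
      (hρ.comp hg0)
  refine ((continuous_exp.tendsto _).comp hlog.neg).congr' ?_
  filter_upwards [Filter.eventually_prod_top_iff.1 (hg0.eventually (eventually_lt_nhds one_pos))]
    with p hp
  simp only [Function.comp_apply, ℓ, neg_neg, ← sum_neg_distrib, exp_sum]
  exact prod_congr rfl fun i _ => exp_log (sub_pos.2 (hp i))

theorem normConst_rpow {σ : ℕ → ℝ} {α : ℝ} (hσ : ∀ i, 0 ≤ σ i) (hα : α ≠ 0) (p : ℕ) :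
    normConst σ α p ^ α = ∑ i ∈ range p, σ i ^ α := by
  rw [normConst, one_div, rpow_inv_rpow (sum_nonneg fun i _ => rpow_nonneg (hσ i) α) hα]

theorem tendsto_normConst_atTop {σ : ℕ → ℝ} {α C : ℝ} (hα : 0 < α) (hC : 0 < C)
    (hσ : ∀ i, C ≤ σ i) : Tendsto (normConst σ α) atTop atTop := by
  have hsum : Tendsto (fun p => ∑ i ∈ range p, σ i ^ α) atTop atTop := by
    refine tendsto_atTop_mono (fun p => ?_)
      (tendsto_natCast_atTop_atTop.atTop_mul_const (rpow_pos_of_pos hC α))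
    simpa using sum_le_sum fun i (_ : i ∈ range p) => rpow_le_rpow hC.le (hσ i) hα.le
  exact (tendsto_rpow_atTop (one_div_pos.2 hα)).comp hsum

theorem div_rpow_neg_eq_mul {u v s : ℝ} (hu : 0 < u) (hv : 0 < v) (hs : 0 < s) (α : ℝ) :
    (u / s) ^ (-α) = (s / v) ^ α * (u / v) ^ (-α) := by
  rw [rpow_neg (div_pos hu hs).le, rpow_neg (div_pos hu hv).le, ← inv_rpow (div_pos hu hs).le,
    ← inv_rpow (div_pos hu hv).le, inv_div, inv_div,
    ← mul_rpow (div_pos hs hv).le (div_pos hv hu).le]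
  congr 1
  field_simp

section TailSums

variable {σ c : ℕ → ℝ} {α C₁ C₂ M x : ℝ}

theorem tendsto_normConst_sub_div_atTop (hα : 0 < α) (hC₁ : 0 < C₁)
    (hσ : ∀ i, σ i ∈ Set.Icc C₁ C₂) (hc : ∀ i, |c i| ≤ M) (hx : 0 < x) :
    Tendsto (fun q : ℕ × ℕ => (normConst σ α q.1 * x - c q.2) / σ q.2) (atTop ×ˢ ⊤) atTop := by
  have hC₂ : 0 < C₂ := hC₁.trans_le ((hσ 0).1.trans (hσ 0).2)
  have hax : Tendsto (fun p => normConst σ α p * x) atTop atTop :=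
    (tendsto_normConst_atTop hα hC₁ fun i => (hσ i).1).atTop_mul_const hx
  have hlow : Tendsto (fun p => (normConst σ α p * x - M) / C₂) atTop atTop :=
    (tendsto_atTop_add_const_right _ (-M) hax).atTop_div_const hC₂
  refine tendsto_atTop_mono' _ ?_ (hlow.comp tendsto_fst)
  filter_upwards [tendsto_fst.eventually (hax.eventually_ge_atTop M)] with q hq
  have hσq := hσ q.2
  calc (normConst σ α q.1 * x - M) / C₂ ≤ (normConst σ α q.1 * x - M) / σ q.2 :=
        div_le_div_of_nonneg_left (sub_nonneg.2 hq) (hC₁.trans_le hσq.1) hσq.2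
    _ ≤ _ := div_le_div_of_nonneg_right (by linarith [(abs_le.1 (hc q.2)).2])
        (hC₁.trans_le hσq.1).le

theorem tendsto_sum_normConst_sub_div_rpow_neg (hα : 0 < α) (hC₁ : 0 < C₁)
    (hσ : ∀ i, σ i ∈ Set.Icc C₁ C₂) (hc : ∀ i, |c i| ≤ M) (hx : 0 < x) :
    Tendsto (fun p => ∑ i ∈ range p, ((normConst σ α p * x - c i) / σ i) ^ (-α)) atTop
      (𝓝 (x ^ (-α))) := by
  set a := normConst σ α
  have hσ0 : ∀ i, 0 < σ i := fun i => hC₁.trans_le (hσ i).1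
  have ha : Tendsto a atTop atTop := tendsto_normConst_atTop hα hC₁ fun i => (hσ i).1
  have hax : Tendsto (fun p => a p * x) atTop atTop := ha.atTop_mul_const hx
  have hw : ∀ᶠ p in atTop, ∑ i ∈ range p, (σ i / (a p * x)) ^ α = x ^ (-α) := by
    filter_upwards [ha.eventually_gt_atTop 0] with p hp
    have hsum : a p ^ α = ∑ i ∈ range p, σ i ^ α :=
      normConst_rpow (fun i => (hσ0 i).le) hα.ne' p
    simp_rw [div_rpow (hσ0 _).le (by positivity : 0 ≤ a p * x), ← sum_div, ← hsum,
      mul_rpow hp.le hx.le, rpow_neg hx.le]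
    field_simp
  have hsmall : Tendsto (fun q : ℕ × ℕ => c q.2 / (a q.1 * x)) (atTop ×ˢ ⊤) (𝓝 0) := by
    refine squeeze_zero_norm' ?_ (((tendsto_const_nhds (x := M)).div_atTop hax).comp tendsto_fst)
    filter_upwards [tendsto_fst.eventually (hax.eventually_gt_atTop 0)] with q hq
    rw [norm_div, Real.norm_eq_abs, Real.norm_eq_abs, abs_of_pos hq]
    exact div_le_div_of_nonneg_right (hc q.2) hq.le
  have hr : Tendsto (fun q : ℕ × ℕ => ((a q.1 * x - c q.2) / (a q.1 * x)) ^ (-α))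
      (atTop ×ˢ ⊤) (𝓝 1) := by
    have h := (tendsto_const_nhds.sub hsmall).rpow_const (p := -α)
      (Or.inl (by norm_num : (1 : ℝ) - 0 ≠ 0))
    rw [sub_zero, one_rpow] at h
    refine h.congr' ?_
    filter_upwards [tendsto_fst.eventually (hax.eventually_gt_atTop 0)] with q hq
    rw [sub_div, div_self hq.ne']
  refine (tendsto_sum_mul_of_tendsto_prod_top
    (r := fun p i => ((a p * x - c i) / (a p * x)) ^ (-α)) ?_
    (tendsto_const_nhds.congr' (hw.mono fun _ h => h.symm)) hr).congr' ?_
  · filter_upwards [tendsto_fst.eventually (hax.eventually_gt_atTop 0)] with q hq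
    exact rpow_nonneg (div_nonneg (hσ0 _).le hq.le) α
  · filter_upwards [hax.eventually_gt_atTop M] with p hp
    refine sum_congr rfl fun i _ => (div_rpow_neg_eq_mul ?_ ?_ (hσ0 i) α).symm
    · linarith [(abs_le.1 (hc i)).2]
    · exact ((abs_nonneg _).trans (hc i)).trans_lt hp

theorem tendsto_prod_one_sub_tail_normConst {G : ℝ → ℝ} (hα : 0 < α) (hC₁ : 0 < C₁)
    (hσ : ∀ i, σ i ∈ Set.Icc C₁ C₂) (hc : ∀ i, |c i| ≤ M) (hx : 0 < x)
    (hG : ∀ t, 0 ≤ G t) (htail : Tendsto (fun t => t ^ α * G t) atTop (𝓝 1)) :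
    Tendsto (fun p => ∏ i ∈ range p, (1 - G ((normConst σ α p * x - c i) / σ i))) atTop
      (𝓝 (exp (-x ^ (-α)))) := by
  set t := fun q : ℕ × ℕ => (normConst σ α q.1 * x - c q.2) / σ q.2
  have ht : Tendsto t (atTop ×ˢ ⊤) atTop := tendsto_normConst_sub_div_atTop hα hC₁ hσ hc hx
  have hsplit : ∀ᶠ q in atTop ×ˢ ⊤, G (t q) = t q ^ (-α) * (t q ^ α * G (t q)) := by
    filter_upwards [ht.eventually_gt_atTop 0] with q hq
    rw [rpow_neg hq.le, inv_mul_cancel_left₀ (rpow_pos_of_pos hq α).ne']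
  have hG0 : Tendsto (fun q => G (t q)) (atTop ×ˢ ⊤) (𝓝 0) := by
    have h := ((tendsto_rpow_neg_atTop hα).comp ht).mul (htail.comp ht)
    rw [zero_mul] at h
    exact h.congr' (hsplit.mono fun _ h => h.symm)
  have hsum : Tendsto (fun p => ∑ i ∈ range p, G (t (p, i))) atTop (𝓝 (x ^ (-α))) := by
    refine (tendsto_sum_mul_of_tendsto_prod_top (r := fun p i => t (p, i) ^ α * G (t (p, i))) ?_
      (tendsto_sum_normConst_sub_div_rpow_neg hα hC₁ hσ hc hx) (htail.comp ht)).congr' ?_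
    · filter_upwards [ht.eventually_gt_atTop 0] with q hq
      exact rpow_nonneg hq.le _
    · filter_upwards [Filter.eventually_prod_top_iff.1 hsplit] with p hp
      exact sum_congr rfl fun i _ => (hp i).symm
  exact tendsto_prod_one_sub_of_tendsto_prod_top (fun _ _ => hG _) hsum hG0

end TailSums

theorem ProbabilityTheory.IndepFun.measure_mem_eq_lintegral {Ω α β : Type*} [MeasurableSpace Ω]
    [MeasurableSpace α] [MeasurableSpace β] {μ : Measure Ω} [IsFiniteMeasure μ]
    {X : Ω → α} {Y : Ω → β} (h : IndepFun X Y μ) (hX : Measurable X) (hY : Measurable Y)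
    {S : Set (α × β)} (hS : MeasurableSet S) :
    μ {ω | (X ω, Y ω) ∈ S} = ∫⁻ ω, μ {ω' | (X ω, Y ω') ∈ S} ∂μ := by
  have hsect : ∀ a, MeasurableSet (Prod.mk a ⁻¹' S) := fun a => hS.preimage measurable_prodMk_left
  calc μ {ω | (X ω, Y ω) ∈ S} = μ.map (fun ω => (X ω, Y ω)) S :=
        (Measure.map_apply (hX.prodMk hY) hS).symm
    _ = ∫⁻ a, μ.map Y (Prod.mk a ⁻¹' S) ∂(μ.map X) := by
        rw [(indepFun_iff_map_prod_eq_prod_map_map hX.aemeasurable hY.aemeasurable).1 h,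
          Measure.prod_apply hS]
    _ = ∫⁻ ω, μ.map Y (Prod.mk (X ω) ⁻¹' S) ∂μ :=
        lintegral_map (measurable_measure_prodMk_left hS) hX
    _ = _ := lintegral_congr fun ω => Measure.map_apply hY (hsect _)

theorem toReal_measure_le_eq_one_sub {Ω : Type*} [MeasurableSpace Ω] {μ : Measure Ω}
    [IsProbabilityMeasure μ] {X : Ω → ℝ} (hX : Measurable X) (t : ℝ) :
    (μ {ω | X ω ≤ t}).toReal = 1 - (μ {ω | t < X ω}).toReal := by
  have h := probReal_compl_eq_one_sub (μ := μ) (measurableSet_lt (measurable_const (a := t)) hX)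
  simpa only [Set.compl_ofPred, not_lt, measureReal_def] using h

section FactorModel

variable {Ω : Type*} [MeasurableSpace Ω] {P : Measure Ω}
  {d : ℕ} {Z : Ω → Fin d → ℝ} {ε₁ ε₂ : ℕ → Ω → ℝ}

theorem measurable_mixFun (hZ : Measurable Z) (hε₁ : ∀ i, Measurable (ε₁ i))
    (hε₂ : ∀ i, Measurable (ε₂ i)) : ∀ j, Measurable (mixFun Z ε₁ ε₂ j)
  | Sum.inl _ => hZ
  | Sum.inr (Sum.inl i) => hε₁ i
  | Sum.inr (Sum.inr i) => hε₂ i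

theorem measure_forall_noise_le_eq_prod
    (hindep : iIndepFun (m := fun i => mixCodomMeasurableSpace d i) (mixFun Z ε₁ ε₂) P)
    (s : Finset ℕ) (b : ℕ → ℝ) :
    P {ω | ∀ i ∈ s, ε₁ i ω ≤ b i ∧ ε₂ i ω ≤ b i}
      = (∏ i ∈ s, P {ω | ε₁ i ω ≤ b i}) * ∏ i ∈ s, P {ω | ε₂ i ω ≤ b i} := by
  set E : Unit ⊕ ℕ ⊕ ℕ → Set Ω := Sum.elim (fun _ => Set.univ)
    (Sum.elim (fun i => {ω | ε₁ i ω ≤ b i}) (fun i => {ω | ε₂ i ω ≤ b i}))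
  set T := (s.disjSum s).map Function.Embedding.inr
  have hE : {ω | ∀ i ∈ s, ε₁ i ω ≤ b i ∧ ε₂ i ω ≤ b i} = ⋂ j ∈ T, E j := by
    ext ω
    simp [T, E, forall_and]
  have hEm : ∀ j ∈ T, MeasurableSet[(mixCodomMeasurableSpace d j).comap (mixFun Z ε₁ ε₂ j)] (E j)
    | Sum.inl _, _ => MeasurableSet.univ
    | Sum.inr (Sum.inl i), _ => ⟨_, (measurableSet_Iic : MeasurableSet (Set.Iic (b i))), rfl⟩
    | Sum.inr (Sum.inr i), _ => ⟨_, (measurableSet_Iic : MeasurableSet (Set.Iic (b i))), rfl⟩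
  rw [hE, hindep.meas_biInter hEm, prod_map, prod_disjSum]
  rfl

theorem indepFun_factor_noise (hZ : Measurable Z) (hε₁ : ∀ i, Measurable (ε₁ i))
    (hε₂ : ∀ i, Measurable (ε₂ i))
    (hindep : iIndepFun (m := fun i => mixCodomMeasurableSpace d i) (mixFun Z ε₁ ε₂) P) (p : ℕ) :
    IndepFun Z (fun ω => ((fun i : Fin p => ε₁ i ω), (fun i : Fin p => ε₂ i ω))) P := by
  set T := ((range p).disjSum (range p)).map Function.Embedding.inr
  have hmem₁ : ∀ i : Fin p, Sum.inr (Sum.inl (i : ℕ)) ∈ T := by simp [T]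
  have hmem₂ : ∀ i : Fin p, Sum.inr (Sum.inr (i : ℕ)) ∈ T := by simp [T]
  have h := hindep.indepFun_finset {Sum.inl ()} T (by simp [T])
    (measurable_mixFun hZ hε₁ hε₂)
  exact h.comp (_mγ := mixCodomMeasurableSpace d (Sum.inl ()))
    (_mγ' := (inferInstance : MeasurableSpace ((Fin p → ℝ) × (Fin p → ℝ))))
    (φ := fun v => v ⟨Sum.inl (), mem_singleton_self _⟩)
    (ψ := fun v =>
      ((fun i => v ⟨_, hmem₁ i⟩ : Fin p → ℝ), (fun i => v ⟨_, hmem₂ i⟩ : Fin p → ℝ)))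
    (measurable_pi_apply _)
    ((measurable_pi_lambda _ fun i => measurable_pi_apply (⟨_, hmem₁ i⟩ : T)).prodMk
      (measurable_pi_lambda _ fun i => measurable_pi_apply (⟨_, hmem₂ i⟩ : T)))

theorem Qmax_le_iff {Ω : Type*} {X₁ X₂ : ℕ → Ω → ℝ} {p : ℕ} (hp : 0 < p) {ω : Ω} {y : ℝ} :
    Qmax X₁ X₂ p p ω ≤ y ↔ ∀ i : Fin p, X₁ i ω ≤ y ∧ X₂ i ω ≤ y := by
  have : Nonempty (Fin p) := ⟨⟨0, hp⟩⟩
  simp only [Qmax, max_le_iff, ciSup_le_iff (Set.finite_range _).bddAbove, forall_and]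

theorem measure_Qmax_le_eq_lintegral [IsFiniteMeasure P] {f : ℕ → (Fin d → ℝ) → ℝ}
    {σ : ℕ → ℝ} {X₁ X₂ : ℕ → Ω → ℝ} (hZ : Measurable Z) (hf : ∀ i, Measurable (f i))
    (hσ : ∀ i, 0 < σ i) (hε₁ : ∀ i, Measurable (ε₁ i)) (hε₂ : ∀ i, Measurable (ε₂ i))
    (hid₁ : ∀ i, IdentDistrib (ε₁ i) (ε₁ 0) P P) (hid₂ : ∀ i, IdentDistrib (ε₂ i) (ε₂ 0) P P)
    (hindep : iIndepFun (m := fun i => mixCodomMeasurableSpace d i) (mixFun Z ε₁ ε₂) P)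
    (hX₁ : ∀ i ω, X₁ i ω = f i (Z ω) + σ i * ε₁ i ω)
    (hX₂ : ∀ i ω, X₂ i ω = f i (Z ω) + σ i * ε₂ i ω) {p : ℕ} (hp : 0 < p) (y : ℝ) :
    P {ω | Qmax X₁ X₂ p p ω ≤ y}
      = ∫⁻ ω, (∏ i ∈ range p, P {ω' | ε₁ 0 ω' ≤ (y - f i (Z ω)) / σ i}) *
          ∏ i ∈ range p, P {ω' | ε₂ 0 ω' ≤ (y - f i (Z ω)) / σ i} ∂P := by
  set U : Ω → (Fin p → ℝ) × (Fin p → ℝ) := fun ω => (fun i => ε₁ i ω, fun i => ε₂ i ω)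
  set S : Set ((Fin d → ℝ) × ((Fin p → ℝ) × (Fin p → ℝ))) :=
    {w | ∀ i : Fin p, f i w.1 + σ i * w.2.1 i ≤ y ∧ f i w.1 + σ i * w.2.2 i ≤ y}
  have hU : Measurable U := by fun_prop
  have hS : MeasurableSet S := by
    simp only [S, Set.ofPred_forall, Set.ofPred_and]
    exact .iInter fun i => (measurableSet_le (by fun_prop) (by fun_prop)).inter
      (measurableSet_le (by fun_prop) (by fun_prop))
  have hshift : ∀ i z e, f i z + σ i * e ≤ y ↔ e ≤ (y - f i z) / σ i := fun i z e => by
    rw [le_div_iff₀ (hσ i)]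
    constructor <;> intro h <;> linarith
  have hQ : {ω | Qmax X₁ X₂ p p ω ≤ y} = {ω | (Z ω, U ω) ∈ S} := by
    ext ω
    simp [Qmax_le_iff hp, hX₁, hX₂, S, U]
  rw [hQ, (indepFun_factor_noise hZ hε₁ hε₂ hindep p).measure_mem_eq_lintegral hZ hU hS]
  refine lintegral_congr fun ω => ?_
  have hsect : {ω' | (Z ω, U ω') ∈ S}
      = {ω' | ∀ i ∈ range p,
          ε₁ i ω' ≤ (y - f i (Z ω)) / σ i ∧ ε₂ i ω' ≤ (y - f i (Z ω)) / σ i} := by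
    ext ω'
    simp [S, U, hshift, Fin.forall_iff]
  rw [hsect, measure_forall_noise_le_eq_prod hindep]
  congr 1 <;> refine prod_congr rfl fun i _ => ?_
  · exact (hid₁ i).measure_mem_eq measurableSet_Iic
  · exact (hid₂ i).measure_mem_eq measurableSet_Iic

end FactorModel

section Limit

open scoped ENNReal

variable {Ω : Type*} [MeasurableSpace Ω] {P : Measure Ω} [IsProbabilityMeasure P]
  {σ : ℕ → ℝ} {α C₁ C₂ x : ℝ}

theorem tendsto_prod_toReal_measure_le_normConst {ε : Ω → ℝ} {c : ℕ → ℝ} {M : ℝ}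
    (hε : Measurable ε)
    (htail : Tendsto (fun t : ℝ => t ^ α * (P {ω | t < ε ω}).toReal) atTop (𝓝 1))
    (hα : 0 < α) (hC₁ : 0 < C₁) (hσ : ∀ i, σ i ∈ Set.Icc C₁ C₂) (hc : ∀ i, |c i| ≤ M)
    (hx : 0 < x) :
    Tendsto (fun p => ∏ i ∈ range p, (P {ω | ε ω ≤ (normConst σ α p * x - c i) / σ i}).toReal)
      atTop (𝓝 (exp (-x ^ (-α)))) := by
  simp_rw [toReal_measure_le_eq_one_sub hε]
  exact tendsto_prod_one_sub_tail_normConst (G := fun t => (P {ω | t < ε ω}).toReal) hα hC₁ hσ hc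
    hx (fun _ => ENNReal.toReal_nonneg) htail

theorem tendsto_measure_Qmax_le {d : ℕ} {Z : Ω → Fin d → ℝ} {ε₁ ε₂ : ℕ → Ω → ℝ}
    {f : ℕ → (Fin d → ℝ) → ℝ} {X₁ X₂ : ℕ → Ω → ℝ} (hZ : Measurable Z)
    (hf : ∀ i, Measurable (f i)) (hfbdd : ∀ᵐ ω ∂P, ∃ M : ℝ, ∀ i, |f i (Z ω)| ≤ M)
    (hα : 0 < α) (hC₁ : 0 < C₁) (hσ : ∀ i, σ i ∈ Set.Icc C₁ C₂)
    (hε₁ : ∀ i, Measurable (ε₁ i)) (hε₂ : ∀ i, Measurable (ε₂ i))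
    (hid₁ : ∀ i, IdentDistrib (ε₁ i) (ε₁ 0) P P) (hid₂ : ∀ i, IdentDistrib (ε₂ i) (ε₂ 0) P P)
    (hindep : iIndepFun (m := fun i => mixCodomMeasurableSpace d i) (mixFun Z ε₁ ε₂) P)
    (htail₁ : Tendsto (fun t : ℝ => t ^ α * (P {ω | t < ε₁ 0 ω}).toReal) atTop (𝓝 1))
    (htail₂ : Tendsto (fun t : ℝ => t ^ α * (P {ω | t < ε₂ 0 ω}).toReal) atTop (𝓝 1))
    (hX₁ : ∀ i ω, X₁ i ω = f i (Z ω) + σ i * ε₁ i ω)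
    (hX₂ : ∀ i ω, X₂ i ω = f i (Z ω) + σ i * ε₂ i ω) (hx : 0 < x) :
    Tendsto (fun p => (P {ω | Qmax X₁ X₂ p p ω ≤ normConst σ α p * x}).toReal) atTop
      (𝓝 (exp (-x ^ (-α)) * exp (-x ^ (-α)))) := by
  have hσ0 : ∀ i, 0 < σ i := fun i => hC₁.trans_le (hσ i).1
  set Φ : ℕ → Ω → ℝ≥0∞ := fun p ω =>
    (∏ i ∈ range p, P {ω' | ε₁ 0 ω' ≤ (normConst σ α p * x - f i (Z ω)) / σ i}) *
      ∏ i ∈ range p, P {ω' | ε₂ 0 ω' ≤ (normConst σ α p * x - f i (Z ω)) / σ i}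
  have hcdf : ∀ ε : Ω → ℝ, Measurable fun t => P {ω | ε ω ≤ t} := fun ε =>
    Monotone.measurable fun s t hst => measure_mono fun ω h => le_trans h hst
  have hΦm : ∀ p, Measurable (Φ p) := fun p =>
    (Finset.measurable_prod _ fun i _ => (hcdf (ε₁ 0)).comp (by fun_prop)).mul
      (Finset.measurable_prod _ fun i _ => (hcdf (ε₂ 0)).comp (by fun_prop))
  have hΦ1 : ∀ p ω, Φ p ω ≤ 1 := fun p ω =>
    mul_le_one' (prod_le_one' fun _ _ => prob_le_one) (prod_le_one' fun _ _ => prob_le_one)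
  have hrepr : ∀ᶠ p in atTop, ∫ ω, (Φ p ω).toReal ∂P
      = (P {ω | Qmax X₁ X₂ p p ω ≤ normConst σ α p * x}).toReal := by
    filter_upwards [eventually_gt_atTop 0] with p hp
    rw [measure_Qmax_le_eq_lintegral hZ hf hσ0 hε₁ hε₂ hid₁ hid₂ hindep hX₁ hX₂ hp,
      integral_toReal (hΦm p).aemeasurable
        (ae_of_all _ fun ω => (hΦ1 p ω).trans_lt ENNReal.one_lt_top)]
  have hlim : ∀ᵐ ω ∂P, Tendsto (fun p => (Φ p ω).toReal) atTop
      (𝓝 (exp (-x ^ (-α)) * exp (-x ^ (-α)))) := by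
    filter_upwards [hfbdd] with ω ⟨M, hM⟩
    simp only [Φ, ENNReal.toReal_mul, ENNReal.toReal_prod]
    exact (tendsto_prod_toReal_measure_le_normConst (hε₁ 0) htail₁ hα hC₁ hσ hM hx).mul
      (tendsto_prod_toReal_measure_le_normConst (hε₂ 0) htail₂ hα hC₁ hσ hM hx)
  have hDCT := tendsto_integral_of_dominated_convergence (fun _ => (1 : ℝ))
    (fun p => (hΦm p).ennreal_toReal.aestronglyMeasurable) (integrable_const 1)
    (fun p => ae_of_all _ fun ω => by
      rw [Real.norm_eq_abs, abs_of_nonneg ENNReal.toReal_nonneg]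
      exact ENNReal.toReal_le_of_le_ofReal zero_le_one (by simpa using hΦ1 p ω)) hlim
  rw [integral_const, probReal_univ, one_smul] at hDCT
  exact hDCT.congr' hrepr

end Limit

theorem coro1_case2_general
    {Ω : Type*} [MeasurableSpace Ω] (P : Measure Ω) [IsProbabilityMeasure P]
    (d : ℕ) (Z : Ω → Fin d → ℝ) (hZm : Measurable Z)
    (f : ℕ → (Fin d → ℝ) → ℝ) (hfm : ∀ i, Measurable (f i))
    (hfbdd : ∀ᵐ ω ∂P, ∃ M : ℝ, ∀ i, |f i (Z ω)| ≤ M)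
    (C₁ C₂ : ℝ) (hC₁ : 0 < C₁)
    (σ : ℕ → ℝ) (hσ : ∀ i, σ i ∈ Set.Icc C₁ C₂)
    (α₁ α₂ : ℝ) (hα₁ : 0 < α₁)
    (ε₁ ε₂ : ℕ → Ω → ℝ) (hε₁m : ∀ i, Measurable (ε₁ i)) (hε₂m : ∀ i, Measurable (ε₂ i))
    (hid₁ : ∀ i, IdentDistrib (ε₁ i) (ε₁ 0) P P)
    (hid₂ : ∀ i, IdentDistrib (ε₂ i) (ε₂ 0) P P)
    (hindep : iIndepFun (m := fun i => mixCodomMeasurableSpace d i) (mixFun Z ε₁ ε₂) P)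
    (htail₁ : Tendsto (fun x : ℝ => x ^ α₁ * (P {ω | x < ε₁ 0 ω}).toReal) atTop (nhds 1))
    (htail₂ : Tendsto (fun x : ℝ => x ^ α₂ * (P {ω | x < ε₂ 0 ω}).toReal) atTop (nhds 1))
    (X₁ X₂ : ℕ → Ω → ℝ)
    (hX₁ : ∀ i ω, X₁ i ω = f i (Z ω) + σ i * ε₁ i ω)
    (hX₂ : ∀ i ω, X₂ i ω = f i (Z ω) + σ i * ε₂ i ω)
    (α : ℝ) (hα₁α : α₁ = α) (hα₂α : α₂ = α) :
    (∀ p : ℕ, normConst σ α₁ p = normConst σ α₂ p) ∧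
    ∀ x : ℝ, 0 < x →
      Tendsto (fun p : ℕ => (P {ω | Qmax X₁ X₂ p p ω ≤ normConst σ α₁ p * x}).toReal) atTop (nhds (frechetCDF α x * frechetCDF α x)) ∧
      frechetCDF α x * frechetCDF α x = Real.exp (-(2 * x ^ (-α))) := by
  subst hα₁α hα₂α
  refine ⟨fun _ => rfl, fun x hx => ⟨?_, ?_⟩⟩
  · simpa only [frechetCDF, if_pos hx] using tendsto_measure_Qmax_le hZm hfm hfbdd hα₁ hC₁ hσ
      hε₁m hε₂m hid₁ hid₂ hindep htail₁ htail₂ hX₁ hX₂ hx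
  · rw [frechetCDF, if_pos hx, ← exp_add]
    ring_nf

/-- Corollary 1, second case: if `α₁ = α₂ = α` then `a_{1,p} = a_{2,p}` for every `p` and `P(Q_p ≤ a_{1,p} x) → Ψ_α(x)·Ψ_α(x) = exp(−2x^{−α})` for every `x > 0`. -/
theorem coro1_case2
    {Ω : Type*} [MeasurableSpace Ω] (P : Measure Ω) [IsProbabilityMeasure P]
    (d : ℕ) (Z : Ω → Fin d → ℝ) (hZm : Measurable Z)
    (f : ℕ → (Fin d → ℝ) → ℝ) (hfm : ∀ i, Measurable (f i))
    (hfbdd : ∀ᵐ ω ∂P, ∃ M : ℝ, ∀ i, |f i (Z ω)| ≤ M)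
    (C₁ C₂ : ℝ) (hC₁ : 0 < C₁) (hC₁₂ : C₁ ≤ C₂)
    (σ : ℕ → ℝ) (hσ : ∀ i, σ i ∈ Set.Icc C₁ C₂)
    (α₁ α₂ : ℝ) (hα₁ : 0 < α₁) (hα₂ : 0 < α₂)
    (ε₁ ε₂ : ℕ → Ω → ℝ) (hε₁m : ∀ i, Measurable (ε₁ i)) (hε₂m : ∀ i, Measurable (ε₂ i))
    (hid₁ : ∀ i, IdentDistrib (ε₁ i) (ε₁ 0) P P)
    (hid₂ : ∀ i, IdentDistrib (ε₂ i) (ε₂ 0) P P)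
    (hindep : iIndepFun (m := fun i => mixCodomMeasurableSpace d i) (mixFun Z ε₁ ε₂) P)
    (htail₁ : Tendsto (fun x : ℝ => x ^ α₁ * (P {ω | x < ε₁ 0 ω}).toReal) atTop (nhds 1))
    (htail₂ : Tendsto (fun x : ℝ => x ^ α₂ * (P {ω | x < ε₂ 0 ω}).toReal) atTop (nhds 1))
    (X₁ X₂ : ℕ → Ω → ℝ)
    (hX₁ : ∀ i ω, X₁ i ω = f i (Z ω) + σ i * ε₁ i ω)
    (hX₂ : ∀ i ω, X₂ i ω = f i (Z ω) + σ i * ε₂ i ω)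
    (α : ℝ) (hα₁α : α₁ = α) (hα₂α : α₂ = α) :
    (∀ p : ℕ, normConst σ α₁ p = normConst σ α₂ p) ∧
    ∀ x : ℝ, 0 < x →
      Tendsto (fun p : ℕ => (P {ω | Qmax X₁ X₂ p p ω ≤ normConst σ α₁ p * x}).toReal) atTop (nhds (frechetCDF α x * frechetCDF α x)) ∧
      frechetCDF α x * frechetCDF α x = Real.exp (-(2 * x ^ (-α))) :=
  coro1_case2_general P d Z hZm f hfm hfbdd C₁ C₂ hC₁ σ hσ α₁ α₂ hα₁ ε₁ ε₂ hε₁m hε₂m hid₁ hid₂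
    hindep htail₁ htail₂ X₁ X₂ hX₁ hX₂ α hα₁α hα₂α
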